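/- For D > 0, R > 0, the function u(x,t) = (1 + exp(√(R/(6D))·x − (5R/6)·t))^{-2} satisfies ∂u/∂t = D·∂²u/∂x² + R·u·(1−u) for all (x,t) ∈ ℝ². -/

import Mathlib

/-- The Ablowitz–Zeppetella exact traveling-wave solution
`u(x,t) = (1 + exp(√(R/(6D))·x − (5R/6)·t))⁻²` satisfies the Fisher-KPP equation
`∂u/∂t = D·∂²u/∂x² + R·u·(1−u)` for all `(x,t) ∈ ℝ²`. -/
theorem fisher_kpp_exact_solution (D R : ℝ) (hD : 0 < D) (hR : 0 < R)
    (u : ℝ → ℝ → ℝ)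
    (hu : ∀ x t, u x t = (1 + Real.exp (Real.sqrt (R / (6 * D)) * x - (5 * R / 6) * t))⁻¹ ^ 2) :
    ∀ x t,
      deriv (fun t' => u x t') t =
        D * deriv (deriv (fun x' => u x' t)) x + R * u x t * (1 - u x t) := by
  intro x t
  set k := Real.sqrt (R / (6 * D)) with hkdef
  have hkk : k * k = R / (6 * D) := by
    rw [← Real.sq_sqrt (show (0:ℝ) ≤ R / (6 * D) by positivity), sq]
  set c := 5 * R / 6 with hcdef
  have hFder : ∀ y : ℝ, HasDerivAt (fun y => (1 + Real.exp y)⁻¹ ^ 2)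
      (2 * (1 + Real.exp y)⁻¹ ^ 1 * (-Real.exp y / (1 + Real.exp y) ^ 2)) y := by
    intro y
    have := (((Real.hasDerivAt_exp y).const_add 1).inv
      (by positivity : (1:ℝ) + Real.exp y ≠ 0)).pow 2
    refine this.congr_deriv ?_
    simp
  -- time derivative
  have hinner_t : HasDerivAt (fun t' : ℝ => k * x - c * t') (-c) t := by
    simpa using (((hasDerivAt_id t).const_mul c).const_sub (k * x))
  have ht : HasDerivAt (fun t' => u x t')
      ((2 * (1 + Real.exp (k * x - c * t))⁻¹ ^ 1 *
        (-Real.exp (k * x - c * t) / (1 + Real.exp (k * x - c * t)) ^ 2)) * (-c)) t := by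
    have h := (hFder (k * x - c * t)).comp t hinner_t
    simpa only [hu, Function.comp_def] using h
  -- first space derivative
  have hinner_x : ∀ x' : ℝ, HasDerivAt (fun x'' : ℝ => k * x'' - c * t) k x' := by
    intro x'
    simpa using (((hasDerivAt_id x').const_mul k).sub_const (c * t))
  have hd1 : (deriv (fun x' => u x' t)) = fun x' =>
      -2 * k * (Real.exp (k * x' - c * t) * ((1 + Real.exp (k * x' - c * t))⁻¹) ^ 3) := by
    funext x'
    have h := (hFder (k * x' - c * t)).comp x' (hinner_x x')
    have hfun : (fun x'' => u x'' t)
        = fun x'' => (1 + Real.exp (k * x'' - c * t))⁻¹ ^ 2 := funext fun x'' => hu x'' t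
    have hde := h.deriv
    simp only [Function.comp_def] at hde
    rw [hfun, hde]
    have hne : (1:ℝ) + Real.exp (k * x' - c * t) ≠ 0 := by positivity
    field_simp
  -- second space derivative
  have hGder : ∀ y : ℝ, HasDerivAt
      (fun y => -2 * k * (Real.exp y * ((1 + Real.exp y)⁻¹) ^ 3))
      (-2 * k * (Real.exp y * ((1 + Real.exp y)⁻¹) ^ 3
        - 3 * Real.exp y ^ 2 * ((1 + Real.exp y)⁻¹) ^ 4)) y := by
    intro y
    have hne : (1:ℝ) + Real.exp y ≠ 0 := by positivity
    have h1 := (Real.hasDerivAt_exp y).mul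
      ((((Real.hasDerivAt_exp y).const_add 1).inv hne).pow 3)
    have h2 := h1.const_mul (-2 * k)
    refine h2.congr_deriv ?_
    simp only [Pi.pow_apply, Pi.inv_apply]
    rw [show (3:ℕ) - 1 = 2 from rfl]
    push_cast
    rw [div_eq_mul_inv, ← inv_pow]
    ring
  have ht2 : HasDerivAt (deriv (fun x' => u x' t))
      ((-2 * k * (Real.exp (k * x - c * t) * ((1 + Real.exp (k * x - c * t))⁻¹) ^ 3
        - 3 * Real.exp (k * x - c * t) ^ 2 * ((1 + Real.exp (k * x - c * t))⁻¹) ^ 4)) * k) x := by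
    rw [hd1]
    exact (hGder (k * x - c * t)).comp (h := fun x'' => k * x'' - c * t) x (hinner_x x)
  rw [ht.deriv, ht2.deriv, hu x t]
  set E := Real.exp (k * x - c * t) with hE
  have hEpos : 0 < E := Real.exp_pos _
  have hne : (1:ℝ) + E ≠ 0 := by positivity
  have key : D * ((-2 * k * (E * ((1 + E)⁻¹) ^ 3 - 3 * E ^ 2 * ((1 + E)⁻¹) ^ 4)) * k)
      = -2 * (R / 6) * (E * ((1 + E)⁻¹) ^ 3 - 3 * E ^ 2 * ((1 + E)⁻¹) ^ 4) := by
    have h : D * ((-2 * k * (E * ((1 + E)⁻¹) ^ 3 - 3 * E ^ 2 * ((1 + E)⁻¹) ^ 4)) * k)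
        = -2 * (D * (k * k)) * (E * ((1 + E)⁻¹) ^ 3 - 3 * E ^ 2 * ((1 + E)⁻¹) ^ 4) := by ring
    rw [h, hkk]
    field_simp
  rw [key, hcdef]
  field_simp
  ring
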